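/- The integer 10 is not an element of the Wooley semigroup W₀, i.e., 10 cannot be written as a finite product of rationals of the form (3n+2)/(2n+1), for n ranging over nonnegative integers. -/

import Mathlib

def g (n : ℕ) : ℚ := (3 * n + 2) / (2 * n + 1)

/-- product of numerators -/
def Nn (l : List ℕ) : ℕ := (l.map fun n => 3 * n + 2).prod
/-- product of denominators -/
def Dn (l : List ℕ) : ℕ := (l.map fun n => 2 * n + 1).prod

lemma Dn_cons (a : ℕ) (t : List ℕ) : Dn (a :: t) = (2 * a + 1) * Dn t := by
  simp [Dn]

lemma Nn_cons (a : ℕ) (t : List ℕ) : Nn (a :: t) = (3 * a + 2) * Nn t := by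
  simp [Nn]

lemma key (l : List ℕ) : (l.map g).prod * (Dn l : ℚ) = (Nn l : ℚ) := by
  induction l with
  | nil => simp [Nn, Dn]
  | cons a t ih =>
    rw [List.map_cons, List.prod_cons, Dn_cons, Nn_cons]
    push_cast
    have hg : g a * (2 * (a : ℚ) + 1) = 3 * a + 2 := by
      rw [g]; field_simp
    linear_combination (g a * (2 * (a : ℚ) + 1)) * ih + ((Nn t : ℚ)) * hg

lemma Dn_odd (l : List ℕ) : Dn l % 2 = 1 := by
  induction l with
  | nil => simp [Dn]
  | cons a t ih =>
    rw [Dn_cons, Nat.mul_mod, ih]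
    omega

lemma three_not_dvd_Nn (l : List ℕ) : ¬ (3 ∣ Nn l) := by
  induction l with
  | nil => simp [Nn]
  | cons a t ih =>
    rw [Nn_cons]
    intro h
    rcases (Nat.Prime.dvd_mul (by norm_num)).1 h with h1 | h1
    · omega
    · exact ih h1

lemma dvd_Dn {n : ℕ} {l : List ℕ} (h : n ∈ l) : (2 * n + 1) ∣ Dn l :=
  List.dvd_prod (List.mem_map.2 ⟨n, h, rfl⟩)

lemma g_pos (n : ℕ) : 0 < g n := by
  unfold g; positivity

lemma g_gt (n : ℕ) : (3 / 2 : ℚ) ≤ g n := by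
  unfold g
  rw [div_le_div_iff₀ (by norm_num) (by positivity)]
  push_cast; nlinarith [Nat.cast_nonneg (α := ℚ) n]

lemma g_le {n : ℕ} (h : 3 ≤ n) : g n ≤ (11 / 7 : ℚ) := by
  unfold g
  rw [div_le_div_iff₀ (by positivity) (by norm_num)]
  have : (3 : ℚ) ≤ (n : ℚ) := by exact_mod_cast h
  nlinarith

lemma prod_lb (l : List ℕ) : (3 / 2 : ℚ) ^ l.length ≤ (l.map g).prod := by
  induction l with
  | nil => simp
  | cons a t ih =>
    simp only [List.map_cons, List.prod_cons, List.length_cons, pow_succ]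
    rw [mul_comm ((3/2 : ℚ) ^ t.length)]
    exact mul_le_mul (g_gt a) ih (by positivity) (g_pos a).le

lemma prod_ub (l : List ℕ) (h : ∀ n ∈ l, 3 ≤ n) :
    (l.map g).prod ≤ (11 / 7 : ℚ) ^ l.length := by
  induction l with
  | nil => simp
  | cons a t ih =>
    simp only [List.map_cons, List.prod_cons, List.length_cons, pow_succ]
    rw [mul_comm ((11/7 : ℚ) ^ t.length)]
    have hp : (0 : ℚ) ≤ (t.map g).prod := by
      apply List.prod_nonneg
      intro x hx
      obtain ⟨n, _, rfl⟩ := List.mem_map.1 hx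
      exact (g_pos n).le
    exact mul_le_mul (g_le (h a List.mem_cons_self)) (ih fun n hn => h n (List.mem_cons_of_mem a hn))
      hp (by norm_num)

lemma erase_prod {a : ℕ} {l : List ℕ} (h : a ∈ l) :
    (l.map g).prod = g a * ((l.erase a).map g).prod := by
  have := ((l.perm_cons_erase h).map g).prod_eq
  simpa using this

lemma five_not (l : List ℕ) : (5 : ℚ) ≠ (l.map g).prod := by
  intro h
  by_cases h0 : 0 ∈ l
  · -- 5 = 2 * P, P = 5/2, denominator even: contradiction
    rw [erase_prod h0] at h
    have hg0 : g 0 = 2 := by norm_num [g]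
    rw [hg0] at h
    have hk := key (l.erase 0)
    set t := l.erase 0
    have : (5 : ℚ) * (Dn t : ℚ) = 2 * (Nn t : ℚ) := by
      rw [h]; ring_nf; nlinarith [hk]
    have hnat : 5 * Dn t = 2 * Nn t := by exact_mod_cast this
    have := Dn_odd t
    omega
  · by_cases h2 : 2 ∈ l
    · rw [erase_prod h2] at h
      have hg2 : g 2 = 8 / 5 := by norm_num [g]
      rw [hg2] at h
      have hk := key (l.erase 2)
      set t := l.erase 2
      have : (25 : ℚ) * (Dn t : ℚ) = 8 * (Nn t : ℚ) := by
        nlinarith [hk, h]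
      have hnat : 25 * Dn t = 8 * Nn t := by exact_mod_cast this
      have := Dn_odd t
      omega
    · by_cases h3 : ∃ n ∈ l, n % 3 = 1
      · obtain ⟨n, hn, hmod⟩ := h3
        have hk := key l
        have : (5 : ℚ) * (Dn l : ℚ) = (Nn l : ℚ) := by rw [h]; exact hk
        have hnat : 5 * Dn l = Nn l := by exact_mod_cast this
        have h31 : (3 : ℕ) ∣ 2 * n + 1 := by omega
        have h3D : (3 : ℕ) ∣ Dn l := h31.trans (dvd_Dn hn)
        exact three_not_dvd_Nn l (hnat ▸ h3D.mul_left 5)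
      · push_neg at h3
        have hall : ∀ n ∈ l, 3 ≤ n := by
          intro n hn
          have := h3 n hn
          rcases Nat.lt_or_ge n 3 with hlt | hge
          · interval_cases n
            · exact absurd hn h0
            · simp at this
            · exact absurd hn h2
          · exact hge
        have hlb := prod_lb l
        have hub := prod_ub l hall
        rw [← h] at hlb hub
        -- length ≤ 3
        have hlen : l.length ≤ 3 := by
          by_contra hc
          push_neg at hc
          have : (3 / 2 : ℚ) ^ 4 ≤ (3 / 2 : ℚ) ^ l.length :=
            pow_le_pow_right₀ (by norm_num) hc
          linarith
        have h117 : (11 / 7 : ℚ) ^ l.length ≤ (11 / 7 : ℚ) ^ 3 :=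
          pow_le_pow_right₀ (by norm_num) hlen
        have : ((11 : ℚ) / 7) ^ 3 < 5 := by norm_num
        linarith
        
theorem ten_not_wooley :
    ¬ ∃ l : List ℕ, l ≠ [] ∧ (10 : ℚ) = (l.map g).prod := by
  rintro ⟨l, -, h⟩
  by_cases h0 : 0 ∈ l
  · rw [erase_prod h0] at h
    have hg0 : g 0 = 2 := by norm_num [g]
    rw [hg0] at h
    exact five_not (l.erase 0) (by linarith)
  · by_cases h2 : 2 ∈ l
    · rw [erase_prod h2] at h
      have hg2 : g 2 = 8 / 5 := by norm_num [g]
      rw [hg2] at h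
      have hk := key (l.erase 2)
      set t := l.erase 2
      have : (25 : ℚ) * (Dn t : ℚ) = 4 * (Nn t : ℚ) := by
        nlinarith [hk, h]
      have hnat : 25 * Dn t = 4 * Nn t := by exact_mod_cast this
      have := Dn_odd t
      omega
    · by_cases h3 : ∃ n ∈ l, n % 3 = 1
      · obtain ⟨n, hn, hmod⟩ := h3
        have hk := key l
        have : (10 : ℚ) * (Dn l : ℚ) = (Nn l : ℚ) := by rw [h]; exact hk
        have hnat : 10 * Dn l = Nn l := by exact_mod_cast this
        have h31 : (3 : ℕ) ∣ 2 * n + 1 := by omega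
        have h3D : (3 : ℕ) ∣ Dn l := h31.trans (dvd_Dn hn)
        exact three_not_dvd_Nn l (hnat ▸ h3D.mul_left 10)
      · push_neg at h3
        have hall : ∀ n ∈ l, 3 ≤ n := by
          intro n hn
          have := h3 n hn
          rcases Nat.lt_or_ge n 3 with hlt | hge
          · interval_cases n
            · exact absurd hn h0
            · simp at this
            · exact absurd hn h2
          · exact hge
        have hlb := prod_lb l
        have hub := prod_ub l hall
        rw [← h] at hlb hub
        have hlen : l.length ≤ 5 := by
          by_contra hc
          push_neg at hc
          have : (3 / 2 : ℚ) ^ 6 ≤ (3 / 2 : ℚ) ^ l.length :=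
            pow_le_pow_right₀ (by norm_num) hc
          linarith
        have h117 : (11 / 7 : ℚ) ^ l.length ≤ (11 / 7 : ℚ) ^ 5 :=
          pow_le_pow_right₀ (by norm_num) hlen
        have : ((11 : ℚ) / 7) ^ 5 < 10 := by norm_num
        linarith
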